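/- arXiv:1804.04966 — 5 statements merged into one kernel-verified Lean document; each statement's English description precedes it below -/
import Mathlib

section
/- Let n : ℕ, let U and A be real n×n matrices with U symmetric (Uᵀ = U), let Δt > 0 be a real number, and define B := -(U * A). Suppose y₀, y₁ : Fin n → ℝ satisfy the implicit Euler relation y₁ = y₀ + Δt • (A *ᵥ y₁). Then (1/Δt) * (y₁ ⬝ᵥ U *ᵥ y₁) + y₁ ⬝ᵥ B *ᵥ y₁ = (1/Δt) * (y₀ ⬝ᵥ U *ᵥ y₁). -/
/-!
Substituting `y₀ = y₁ - Δt • A y₁` into `y₀ᵀ U y₁` gives `y₁ᵀ U y₁ - Δt (A y₁)ᵀ U y₁`, and the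
symmetry of `U` turns `(A y₁)ᵀ U y₁` into `y₁ᵀ (U A) y₁ = -y₁ᵀ B y₁`; dividing by `Δt` gives the
identity.
-/

open Matrix

theorem Matrix.dotProduct_mulVec_comm_of_transpose_eq {ι R : Type*} [Fintype ι]
    [CommSemiring R] {U : Matrix ι ι R} (hU : Uᵀ = U) (v w : ι → R) :
    v ⬝ᵥ U *ᵥ w = w ⬝ᵥ U *ᵥ v := by
  rw [dotProduct_mulVec, ← hU, vecMul_transpose, hU, dotProduct_comm]

theorem Matrix.dotProduct_mulVec_of_implicit_euler_step {ι R : Type*} [Fintype ι] [CommRing R]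
    {U : Matrix ι ι R} (hU : Uᵀ = U) (A : Matrix ι ι R) {Δt : R} {y₀ y₁ : ι → R}
    (h : y₁ = y₀ + Δt • (A *ᵥ y₁)) :
    y₀ ⬝ᵥ U *ᵥ y₁ = y₁ ⬝ᵥ U *ᵥ y₁ - Δt * (y₁ ⬝ᵥ (U * A) *ᵥ y₁) := by
  have hy₀ : y₀ = y₁ - Δt • (A *ᵥ y₁) := eq_sub_of_add_eq h.symm
  rw [hy₀, sub_dotProduct, smul_dotProduct, smul_eq_mul,
    dotProduct_mulVec_comm_of_transpose_eq hU (A *ᵥ y₁), mulVec_mulVec]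

theorem implicit_euler_energy_identity (n : ℕ)
    (U A : Matrix (Fin n) (Fin n) ℝ) (hU : Uᵀ = U)
    (Δt : ℝ) (hΔt : 0 < Δt)
    (B : Matrix (Fin n) (Fin n) ℝ) (hB : B = -(U * A))
    (y₀ y₁ : Fin n → ℝ) (h : y₁ = y₀ + Δt • (A *ᵥ y₁)) :
    (1 / Δt) * (y₁ ⬝ᵥ U *ᵥ y₁) + y₁ ⬝ᵥ B *ᵥ y₁ = (1 / Δt) * (y₀ ⬝ᵥ U *ᵥ y₁) := by
  rw [dotProduct_mulVec_of_implicit_euler_step hU A h, hB, neg_mulVec, dotProduct_neg]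
  field_simp
  ring
end

section
/- Let n : ℕ, let U and A be real n×n matrices with U symmetric (Uᵀ = U) and positive semidefinite (x ⬝ᵥ U *ᵥ x ≥ 0 for every x), and suppose the matrix B := -(U * A) has nonnegative quadratic form, i.e. x ⬝ᵥ B *ᵥ x ≥ 0 for every x : Fin n → ℝ. Let Δt > 0 and suppose y₀, y₁ : Fin n → ℝ satisfy y₁ = y₀ + Δt • (A *ᵥ y₁). Then y₁ ⬝ᵥ U *ᵥ y₁ ≤ y₀ ⬝ᵥ U *ᵥ y₀. -/
open Matrix

variable {ι R : Type*} [Fintype ι]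

theorem Matrix.IsSymm.dotProduct_mulVec_comm [CommSemiring R] {U : Matrix ι ι R} (hU : U.IsSymm)
    (x y : ι → R) : x ⬝ᵥ U *ᵥ y = y ⬝ᵥ U *ᵥ x := by
  rw [← dotProduct_transpose_mulVec, hU.eq]

theorem Matrix.IsSymm.dotProduct_mulVec_sub [CommRing R] {U : Matrix ι ι R} (hU : U.IsSymm)
    (x v : ι → R) :
    (x - v) ⬝ᵥ U *ᵥ (x - v) = x ⬝ᵥ U *ᵥ x - 2 * (x ⬝ᵥ U *ᵥ v) + v ⬝ᵥ U *ᵥ v := by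
  rw [mulVec_sub, sub_dotProduct, dotProduct_sub, dotProduct_sub, hU.dotProduct_mulVec_comm v x]
  ring

theorem Matrix.IsSymm.implicitEuler_energy_eq [CommRing R] {U A : Matrix ι ι R} (hU : U.IsSymm)
    {τ : R} {y₀ y₁ : ι → R} (h : y₁ = y₀ + τ • (A *ᵥ y₁)) :
    y₀ ⬝ᵥ U *ᵥ y₀ = y₁ ⬝ᵥ U *ᵥ y₁ - 2 * τ * (y₁ ⬝ᵥ (U * A) *ᵥ y₁)
      + τ ^ 2 * ((A *ᵥ y₁) ⬝ᵥ U *ᵥ (A *ᵥ y₁)) := by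
  rw [eq_sub_of_add_eq h.symm, hU.dotProduct_mulVec_sub, mulVec_smul, dotProduct_smul,
    smul_dotProduct, dotProduct_smul, ← mulVec_mulVec, smul_eq_mul, smul_eq_mul, smul_eq_mul]
  ring

theorem Matrix.IsSymm.implicitEuler_energy_le [CommRing R] [PartialOrder R] [IsOrderedRing R]
    {U A : Matrix ι ι R} (hU : U.IsSymm) (hpsd : ∀ x, 0 ≤ x ⬝ᵥ U *ᵥ x)
    (hdiss : ∀ x, x ⬝ᵥ (U * A) *ᵥ x ≤ 0) {τ : R} (hτ : 0 ≤ τ) {y₀ y₁ : ι → R}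
    (h : y₁ = y₀ + τ • (A *ᵥ y₁)) :
    y₁ ⬝ᵥ U *ᵥ y₁ ≤ y₀ ⬝ᵥ U *ᵥ y₀ := by
  have dissipation : 0 ≤ -(2 * τ * (y₁ ⬝ᵥ (U * A) *ᵥ y₁)) := by
    rw [neg_mul_eq_mul_neg]
    exact mul_nonneg (mul_nonneg zero_le_two hτ) (neg_nonneg.2 (hdiss y₁))
  have stepEnergy : 0 ≤ τ ^ 2 * ((A *ᵥ y₁) ⬝ᵥ U *ᵥ (A *ᵥ y₁)) :=
    mul_nonneg (pow_nonneg hτ 2) (hpsd _)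
  rw [hU.implicitEuler_energy_eq h, sub_eq_add_neg]
  exact le_add_of_le_of_nonneg (le_add_of_nonneg_right dissipation) stepEnergy

theorem implicit_euler_energy_decay (n : ℕ)
    (U A : Matrix (Fin n) (Fin n) ℝ) (hU : Uᵀ = U)
    (hpsd : ∀ x : Fin n → ℝ, 0 ≤ x ⬝ᵥ U *ᵥ x)
    (B : Matrix (Fin n) (Fin n) ℝ) (hB : B = -(U * A))
    (hBpos : ∀ x : Fin n → ℝ, 0 ≤ x ⬝ᵥ B *ᵥ x)
    (Δt : ℝ) (hΔt : 0 < Δt)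
    (y₀ y₁ : Fin n → ℝ) (h : y₁ = y₀ + Δt • (A *ᵥ y₁)) :
    y₁ ⬝ᵥ U *ᵥ y₁ ≤ y₀ ⬝ᵥ U *ᵥ y₀ := by
  have hdiss (x : Fin n → ℝ) : x ⬝ᵥ (U * A) *ᵥ x ≤ 0 := by
    simpa only [hB, neg_mulVec, dotProduct_neg, neg_nonneg] using hBpos x
  exact IsSymm.implicitEuler_energy_le hU hpsd hdiss hΔt.le h
end

section
/- Let n : ℕ, let U and A be real n×n matrices with U symmetric (Uᵀ = U) and positive semidefinite (x ⬝ᵥ U *ᵥ x ≥ 0 for every x), and suppose the matrix B := -(U * A) has nonnegative quadratic form, i.e. x ⬝ᵥ B *ᵥ x ≥ 0 for every x : Fin n → ℝ. Let Δt > 0 and let y : ℕ → (Fin n → ℝ) be a sequence satisfying, for every k : ℕ, the implicit Euler relation y (k+1) = y k + Δt • (A *ᵥ y (k+1)). Then for every k : ℕ, y k ⬝ᵥ U *ᵥ y k ≤ y 0 ⬝ᵥ U *ᵥ y 0. In particular, the scheme is unconditionally stable: the energy bound holds for every time step size Δt > 0. -/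
/-!
The energy `E(y) = yᵀ U y` does not increase along one implicit Euler step. Writing the old
state as `w = v - Δt A v` in terms of the new state `v` and expanding,
`E(w) = E(v) + 2 Δt vᵀ (-U A) v + Δt² E(A v) ≥ E(v)`,
since both correction terms are nonnegative for every `Δt ≥ 0`; induction on the number of
steps finishes the proof.
-/

open Matrix

namespace Matrix

variable {ι R : Type*} [Fintype ι]

theorem dotProduct_mulVec_comm_of_transpose_eq_s4 [CommSemiring R] {U : Matrix ι ι R}
    (hU : Uᵀ = U) (a b : ι → R) : a ⬝ᵥ U *ᵥ b = b ⬝ᵥ U *ᵥ a := by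
  simpa only [hU] using dotProduct_transpose_mulVec U a b

theorem dotProduct_mulVec_sub_smul_self [CommRing R] {U : Matrix ι ι R} (hU : Uᵀ = U)
    (v u : ι → R) (t : R) :
    (v - t • u) ⬝ᵥ U *ᵥ (v - t • u) =
      v ⬝ᵥ U *ᵥ v - 2 * t * (v ⬝ᵥ U *ᵥ u) + t ^ 2 * (u ⬝ᵥ U *ᵥ u) := by
  simp only [mulVec_sub, mulVec_smul, dotProduct_sub, sub_dotProduct, dotProduct_smul,
    smul_dotProduct, smul_eq_mul, dotProduct_mulVec_comm_of_transpose_eq_s4 hU u v]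
  ring

variable [CommRing R] [LinearOrder R] [IsStrictOrderedRing R]

theorem dotProduct_mulVec_le_of_implicit_euler_step {U A : Matrix ι ι R} (hU : Uᵀ = U)
    (hpsd : ∀ x, 0 ≤ x ⬝ᵥ U *ᵥ x) (hdiss : ∀ x, 0 ≤ x ⬝ᵥ (-(U * A)) *ᵥ x)
    {t : R} (ht : 0 ≤ t) {w v : ι → R} (hstep : v = w + t • (A *ᵥ v)) :
    v ⬝ᵥ U *ᵥ v ≤ w ⬝ᵥ U *ᵥ w := by
  have hw : w = v - t • (A *ᵥ v) := eq_sub_of_add_eq hstep.symm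
  have hcross : v ⬝ᵥ U *ᵥ (A *ᵥ v) ≤ 0 := by
    simpa only [neg_mulVec, dotProduct_neg, ← mulVec_mulVec, neg_nonneg] using hdiss v
  rw [hw, dotProduct_mulVec_sub_smul_self hU]
  nlinarith [mul_nonneg ht (neg_nonneg.mpr hcross), mul_nonneg (sq_nonneg t) (hpsd (A *ᵥ v))]

end Matrix

theorem implicit_euler_unconditional_stability (n : ℕ)
    (U A : Matrix (Fin n) (Fin n) ℝ) (hU : Uᵀ = U)
    (hpsd : ∀ x : Fin n → ℝ, 0 ≤ x ⬝ᵥ U *ᵥ x)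
    (B : Matrix (Fin n) (Fin n) ℝ) (hB : B = -(U * A))
    (hBpos : ∀ x : Fin n → ℝ, 0 ≤ x ⬝ᵥ B *ᵥ x)
    (Δt : ℝ) (hΔt : 0 < Δt)
    (y : ℕ → (Fin n → ℝ))
    (h : ∀ k : ℕ, y (k + 1) = y k + Δt • (A *ᵥ y (k + 1))) :
    ∀ k : ℕ, y k ⬝ᵥ U *ᵥ y k ≤ y 0 ⬝ᵥ U *ᵥ y 0 := by
  subst hB
  have henergy : Antitone fun k ↦ y k ⬝ᵥ U *ᵥ y k := antitone_nat_of_succ_le fun k ↦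
    dotProduct_mulVec_le_of_implicit_euler_step hU hpsd hBpos hΔt.le (h k)
  exact fun k ↦ henergy k.zero_le
end

section
/- Let R, C, Δt be positive real numbers and let P, π₀ be real numbers. Suppose π is a real number satisfying the implicit Euler relation π = π₀ + (Δt/(R*C)) * (P - π), and set Q := (P - π)/R. Then C * π^2 + 2 * Δt * R * Q^2 ≤ C * π₀^2 + 2 * Δt * P * Q. -/
/-!
The implicit Euler step makes the energy balance exact up to a numerical dissipation term:
from `C (π - π₀) = Δt Q` one gets `C π² + C (π - π₀)² = C π₀² + 2 Δt π Q`, and Ohm's law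
`π = P - R Q` turns the power `π Q` delivered to the capacitor into `P Q - R Q²`.
-/

theorem implicit_euler_energy_identity_s6 {α : Type*} [CommRing α] {C Δt π₀ π Q : α} (h : C * (π - π₀) = Δt * Q) :
    C * π ^ 2 + C * (π - π₀) ^ 2 = C * π₀ ^ 2 + 2 * Δt * π * Q := by
  linear_combination (2 * π) * h

theorem implicit_euler_RC_energy_inequality_general
    (R C Δt : ℝ) (hR : 0 < R) (hC : 0 < C)
    (P π₀ π : ℝ)
    (hstep : π = π₀ + (Δt / (R * C)) * (P - π))
    (Q : ℝ) (hQ : Q = (P - π) / R) :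
    C * π ^ 2 + 2 * Δt * R * Q ^ 2 ≤ C * π₀ ^ 2 + 2 * Δt * P * Q := by
  have hohm : P - π = R * Q := by
    rw [hQ]
    field_simp
  have hcap : C * (π - π₀) = Δt * Q := by
    rw [hohm] at hstep
    field_simp at hstep
    linarith
  have hdissipation : 0 ≤ C * (π - π₀) ^ 2 := by positivity
  linear_combination implicit_euler_energy_identity_s6 hcap - (2 * Δt * Q) * hohm + hdissipation

theorem implicit_euler_RC_energy_inequality
    (R C Δt : ℝ) (hR : 0 < R) (hC : 0 < C) (hΔt : 0 < Δt)
    (P π₀ π : ℝ)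
    (hstep : π = π₀ + (Δt / (R * C)) * (P - π))
    (Q : ℝ) (hQ : Q = (P - π) / R) :
    C * π ^ 2 + 2 * Δt * R * Q ^ 2 ≤ C * π₀ ^ 2 + 2 * Δt * P * Q :=
  implicit_euler_RC_energy_inequality_general R C Δt hR hC P π₀ π hstep Q hQ
end

section
/- Let Lc, Rc, H be positive real numbers, let V0, s0, s1, ω, a0, a1, k, L, R1, R2 be real numbers, and define: s t = s0 + s1 * Real.sin (ω * t); 𝒫 x = a0 + a1 * Real.exp (-k * x); Q1 t = (V0 * H / 2) * s t and Q2 t = -(V0 * H / 2) * s t; P1 t = s t * 𝒫 L and P2 t = s t * 𝒫 0; π1 t = P1 t - R1 * Q1 t and π2 t = P2 t - R2 * Q2 t; 𝒞 = (𝒫 L - 𝒫 0 - (R1 + R2) * (V0 * H / 2)) / Rc; Λ1 = s0 * 𝒞, Λ2 = s1 * 𝒞 / ((ω * Lc / Rc)^2 + 1), Λ3 = -(ω * Λ2 * Lc / Rc); and ω11 t = Λ1 + Λ2 * Real.sin (ω * t) + Λ3 * Real.cos (ω * t). Then for every t : ℝ, Lc * deriv ω11 t = π1 t - π2 t - Rc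 * ω11 t. -/
/-!
The pressure drop across the circuit is `π1 - π2 = s(t) (𝒫 L - 𝒫 0 - (R1 + R2) V0 H / 2) = Rc 𝒞 s(t)`,
so `ω11` must be the steady response of a series `Rc`–`Lc` branch to the forcing `Rc 𝒞 (s0 + s1 sin ωt)`.
Matching the constant, `sin` and `cos` coefficients of `Lc ω11' + Rc ω11` gives `Λ1 = s0 𝒞`,
`Lc ω Λ2 + Rc Λ3 = 0` and `Rc Λ2 - Lc ω Λ3 = Rc s1 𝒞`, which the stated `Λ2`, `Λ3` solve.
-/

open Real

theorem hasDerivAt_const_add_sin_add_cos (a b c ω t : ℝ) :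
    HasDerivAt (fun t => a + b * sin (ω * t) + c * cos (ω * t))
      (ω * (b * cos (ω * t) - c * sin (ω * t))) t := by
  have hlin : HasDerivAt (fun t : ℝ => ω * t) ω t := by
    simpa using (hasDerivAt_id t).const_mul ω
  have hsin := (hasDerivAt_sin (ω * t)).comp t hlin
  have hcos := (hasDerivAt_cos (ω * t)).comp t hlin
  exact (((hsin.const_mul b).const_add a).add (hcos.const_mul c)).congr_deriv (by ring)

theorem rl_circuit_sinusoidal_response {Lc Rc : ℝ} (hRc : Rc ≠ 0) (s0 s1 ω C Λ2 Λ3 : ℝ)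
    (hΛ2 : Λ2 = s1 * C / ((ω * Lc / Rc) ^ 2 + 1)) (hΛ3 : Λ3 = -(ω * Λ2 * Lc / Rc)) (t : ℝ) :
    Lc * deriv (fun t => s0 * C + Λ2 * sin (ω * t) + Λ3 * cos (ω * t)) t
      = Rc * C * (s0 + s1 * sin (ω * t))
        - Rc * (s0 * C + Λ2 * sin (ω * t) + Λ3 * cos (ω * t)) := by
  have hcos_coeff : Lc * ω * Λ2 + Rc * Λ3 = 0 := by
    rw [hΛ3]; field_simp; ring
  have hsin_coeff : Rc * Λ2 - Lc * ω * Λ3 = Rc * C * s1 := by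
    have hden : (ω * Lc / Rc) ^ 2 + 1 ≠ 0 := by positivity
    rw [hΛ3, hΛ2]; field_simp; ring
  rw [(hasDerivAt_const_add_sin_add_cos _ Λ2 Λ3 ω t).deriv]
  linear_combination cos (ω * t) * hcos_coeff + sin (ω * t) * hsin_coeff

theorem example3_circuit_ode_general
    (Lc Rc H : ℝ) (hRc : 0 < Rc)
    (V0 s0 s1 ω L R1 R2 : ℝ)
    (s : ℝ → ℝ) (hs : ∀ t, s t = s0 + s1 * Real.sin (ω * t))
    (Pscr : ℝ → ℝ)
    (Q1 Q2 P1 P2 π1 π2 : ℝ → ℝ)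
    (hQ1 : ∀ t, Q1 t = (V0 * H / 2) * s t)
    (hQ2 : ∀ t, Q2 t = -(V0 * H / 2) * s t)
    (hP1 : ∀ t, P1 t = s t * Pscr L)
    (hP2 : ∀ t, P2 t = s t * Pscr 0)
    (hπ1 : ∀ t, π1 t = P1 t - R1 * Q1 t)
    (hπ2 : ∀ t, π2 t = P2 t - R2 * Q2 t)
    (𝒞 Λ1 Λ2 Λ3 : ℝ)
    (h𝒞 : 𝒞 = (Pscr L - Pscr 0 - (R1 + R2) * (V0 * H / 2)) / Rc)
    (hΛ1 : Λ1 = s0 * 𝒞)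
    (hΛ2 : Λ2 = s1 * 𝒞 / ((ω * Lc / Rc) ^ 2 + 1))
    (hΛ3 : Λ3 = -(ω * Λ2 * Lc / Rc))
    (ω11 : ℝ → ℝ)
    (hω11 : ∀ t, ω11 t = Λ1 + Λ2 * Real.sin (ω * t) + Λ3 * Real.cos (ω * t)) :
    ∀ t : ℝ, Lc * deriv ω11 t = π1 t - π2 t - Rc * ω11 t := by
  intro t
  have pressure_drop : π1 t - π2 t = Rc * 𝒞 * s t := by
    rw [hπ1, hπ2, hP1, hP2, hQ1, hQ2, h𝒞]
    field_simp
    ring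
  rw [pressure_drop, hs, hω11 t, funext hω11, hΛ1]
  exact rl_circuit_sinusoidal_response hRc.ne' s0 s1 ω 𝒞 Λ2 Λ3 hΛ2 hΛ3 t

theorem example3_circuit_ode
    (Lc Rc H : ℝ) (hLc : 0 < Lc) (hRc : 0 < Rc) (hH : 0 < H)
    (V0 s0 s1 ω a0 a1 k L R1 R2 : ℝ)
    (s : ℝ → ℝ) (hs : ∀ t, s t = s0 + s1 * Real.sin (ω * t))
    (Pscr : ℝ → ℝ) (hPscr : ∀ x, Pscr x = a0 + a1 * Real.exp (-k * x))
    (Q1 Q2 P1 P2 π1 π2 : ℝ → ℝ)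
    (hQ1 : ∀ t, Q1 t = (V0 * H / 2) * s t)
    (hQ2 : ∀ t, Q2 t = -(V0 * H / 2) * s t)
    (hP1 : ∀ t, P1 t = s t * Pscr L)
    (hP2 : ∀ t, P2 t = s t * Pscr 0)
    (hπ1 : ∀ t, π1 t = P1 t - R1 * Q1 t)
    (hπ2 : ∀ t, π2 t = P2 t - R2 * Q2 t)
    (𝒞 Λ1 Λ2 Λ3 : ℝ)
    (h𝒞 : 𝒞 = (Pscr L - Pscr 0 - (R1 + R2) * (V0 * H / 2)) / Rc)
    (hΛ1 : Λ1 = s0 * 𝒞)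
    (hΛ2 : Λ2 = s1 * 𝒞 / ((ω * Lc / Rc) ^ 2 + 1))
    (hΛ3 : Λ3 = -(ω * Λ2 * Lc / Rc))
    (ω11 : ℝ → ℝ)
    (hω11 : ∀ t, ω11 t = Λ1 + Λ2 * Real.sin (ω * t) + Λ3 * Real.cos (ω * t)) :
    ∀ t : ℝ, Lc * deriv ω11 t = π1 t - π2 t - Rc * ω11 t :=
  example3_circuit_ode_general Lc Rc H hRc V0 s0 s1 ω L R1 R2 s hs Pscr Q1 Q2 P1 P2 π1 π2 hQ1 hQ2
    hP1 hP2 hπ1 hπ2 𝒞 Λ1 Λ2 Λ3 h𝒞 hΛ1 hΛ2 hΛ3 ω11 hω11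
end
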